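/- arXiv:2409.05654 — 2 statements merged into one kernel-verified Lean document; each statement's English description precedes it below -/
import Mathlib

section
/- Let Ω be a measurable space, H an arbitrary (possibly composite) set of probability measures on Ω, Q a probability measure on Ω, α > 0, and U a utility function on [0, 1/α]. Let E_α denote the set of measurable ε : Ω → [0, 1/α] with E_P[ε] ≤ 1 for every P ∈ H. Then there exists ε* ∈ E_α such that E_Q[U(ε*)] = sup_{ε ∈ E_α} E_Q[U(ε)]; that is, a valid level-α expected-utility-optimal continuous test exists. -/
/-!
Take a maximizing sequence of valid tests. In `L²(Q)` the valid tests of expected utility at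
least `c` form a convex set (concavity of `U`), decreasing in `c`; points of almost minimal norm
in these nested convex sets form a Cauchy sequence by the parallelogram law (a Komlós-type
argument), so a subsequence of valid tests, each at least as good as the corresponding term of
the maximizing sequence, converges `Q`-a.e. Its pointwise liminf is valid by Fatou's lemma, and
since `U` is bounded by `U (1/α) < ∞`, dominated convergence shows that it attains the supremum.
-/

open MeasureTheory ENNReal NNReal Set

/-- A utility function `U : [0, 1/α] → [0, ∞]` with derivative `U' = D`:
`U 0 = 0`, `U` is non-decreasing, concave and continuous on `[0, 1/α]`, finite
and differentiable (in real coordinates) on the interior of its domain, and its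
derivative `D` is continuous and decreasing on `[0, 1/α]`. -/
structure IsUtility (α : ℝ≥0∞) (U D : ℝ≥0∞ → ℝ≥0∞) : Prop where
  map_zero : U 0 = 0
  monotoneOn : MonotoneOn U (Icc 0 α⁻¹)
  concaveOn : ∀ x ∈ Icc (0 : ℝ≥0∞) α⁻¹, ∀ y ∈ Icc (0 : ℝ≥0∞) α⁻¹,
    ∀ t : ℝ≥0∞, t ≤ 1 → t * U x + (1 - t) * U y ≤ U (t * x + (1 - t) * y)
  continuousOn : ContinuousOn U (Icc 0 α⁻¹)
  finite_of_lt : ∀ x : ℝ≥0∞, x < α⁻¹ → U x ≠ ∞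
  deriv_finite : ∀ x : ℝ≥0∞, 0 < x → x < α⁻¹ → D x ≠ ∞
  hasDerivAt : ∀ x : ℝ, 0 < x → ENNReal.ofReal x < α⁻¹ →
    HasDerivAt (fun t : ℝ => (U (ENNReal.ofReal t)).toReal)
      ((D (ENNReal.ofReal x)).toReal) x
  deriv_continuousOn : ContinuousOn D (Icc 0 α⁻¹)
  deriv_antitoneOn : AntitoneOn D (Icc 0 α⁻¹)

open Filter Topology

section Komlos

variable {E : Type*} [NormedAddCommGroup E] [InnerProductSpace ℝ E]

theorem norm_sub_sq_le_of_le_norm_midpoint {x y : E} {r : ℝ} (hr : 0 ≤ r)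
    (h : r ≤ ‖(2⁻¹ : ℝ) • (x + y)‖) :
    ‖x - y‖ ^ 2 ≤ 2 * ‖x‖ ^ 2 + 2 * ‖y‖ ^ 2 - 4 * r ^ 2 := by
  have hpar := parallelogram_law_with_norm ℝ x y
  rw [norm_smul, Real.norm_of_nonneg (by norm_num)] at h
  nlinarith

theorem exists_cauchySeq_mem_of_antitone_of_convex {A : ℕ → Set E} (hA : Antitone A)
    (hconv : ∀ n, Convex ℝ (A n)) {M : ℝ} (hM : ∀ n, ∃ x ∈ A n, ‖x‖ ≤ M) :
    ∃ g : ℕ → E, (∀ n, g n ∈ A n) ∧ CauchySeq g := by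
  have : ∀ n, Nonempty (A n) := fun n => let ⟨x, hx, _⟩ := hM n; ⟨⟨x, hx⟩⟩
  set δ : ℕ → ℝ := fun n => ⨅ x : A n, ‖(x : E)‖
  have hδ_bdd : ∀ n, BddBelow (range fun x : A n => ‖(x : E)‖) :=
    fun n => ⟨0, by rintro _ ⟨x, rfl⟩; exact norm_nonneg _⟩
  have hδ_le : ∀ n, ∀ x ∈ A n, δ n ≤ ‖x‖ := fun n x hx => ciInf_le (hδ_bdd n) ⟨x, hx⟩
  have hδ_nonneg : ∀ n, 0 ≤ δ n := fun n => le_ciInf fun x => norm_nonneg _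
  have hδ_mono : Monotone δ := fun m n h => le_ciInf fun x => hδ_le m x (hA h x.2)
  have hδ_bddAbove : BddAbove (range δ) := ⟨M, by
    rintro _ ⟨n, rfl⟩; obtain ⟨x, hx, hxM⟩ := hM n; exact (hδ_le n x hx).trans hxM⟩
  set d := ⨆ n, δ n
  have hδd : ∀ n, δ n ≤ d := le_ciSup hδ_bddAbove
  have hδ_tendsto : Tendsto δ atTop (𝓝 d) := tendsto_atTop_ciSup hδ_mono hδ_bddAbove
  have hg : ∀ n, ∃ x ∈ A n, ‖x‖ < δ n + 1 / (n + 1) := fun n => by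
    obtain ⟨x, hx⟩ := exists_lt_of_ciInf_lt (lt_add_of_pos_right (δ n) (Nat.one_div_pos_of_nat))
    exact ⟨x, x.2, hx⟩
  choose g hgA hg_norm using hg
  -- The midpoint of `g n` and `g m` lies in `A N`, so the parallelogram law applies with `r = δ N`.
  have hg_dist : ∀ n m N, N ≤ n → N ≤ m →
      dist (g n) (g m) ≤ √(4 * (d + 1 / (N + 1)) ^ 2 - 4 * δ N ^ 2) := by
    intro n m N hn hm
    have hmid : (2⁻¹ : ℝ) • (g n + g m) ∈ A N := by
      simpa [smul_add] using hconv N (hA hn (hgA n)) (hA hm (hgA m))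
        (by norm_num : (0 : ℝ) ≤ 2⁻¹) (by norm_num : (0 : ℝ) ≤ 2⁻¹) (by norm_num)
    have hsmall : ∀ k, N ≤ k → ‖g k‖ ≤ d + 1 / (N + 1) := fun k hk =>
      (hg_norm k).le.trans (add_le_add (hδd k) (Nat.one_div_le_one_div hk))
    have h := norm_sub_sq_le_of_le_norm_midpoint (hδ_nonneg N) (hδ_le N _ hmid)
    rw [dist_eq_norm, ← Real.sqrt_sq (norm_nonneg _)]
    gcongr
    nlinarith [hsmall n hn, hsmall m hm, norm_nonneg (g n), norm_nonneg (g m)]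
  refine ⟨g, hgA, cauchySeq_of_le_tendsto_0 _ hg_dist ?_⟩
  have hbound := (((tendsto_const_nhds (x := d)).add
    tendsto_one_div_add_atTop_nhds_zero_nat).pow 2).const_mul 4
  have hlim := hbound.sub ((hδ_tendsto.pow 2).const_mul 4)
  simpa using hlim.sqrt

end Komlos

theorem ContinuousOn.measurable_comp_of_forall_mem {Ω X Y : Type*} [MeasurableSpace Ω]
    [TopologicalSpace X] [MeasurableSpace X] [OpensMeasurableSpace X]
    [TopologicalSpace Y] [MeasurableSpace Y] [BorelSpace Y] {f : X → Y} {s : Set X}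
    (hf : ContinuousOn f s) {g : Ω → X} (hg : Measurable g) (hgs : ∀ ω, g ω ∈ s) :
    Measurable fun ω => f (g ω) :=
  (continuousOn_iff_continuous_domRestrict.mp hf).measurable.comp (hg.subtype_mk (h := hgs))

theorem MeasureTheory.exists_Lp_ae_eq_toReal_norm_le {Ω : Type*} [MeasurableSpace Ω]
    {μ : Measure Ω} [IsProbabilityMeasure μ] {p : ℝ≥0∞}
    {ε : Ω → ℝ≥0∞} {β : ℝ≥0∞} (hε : Measurable ε) (hβ : β ≠ ∞) (hεβ : ∀ ω, ε ω ≤ β) :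
    ∃ f : Lp ℝ p μ, f =ᵐ[μ] (fun ω => (ε ω).toReal) ∧ ‖f‖ ≤ β.toReal := by
  have hbound : ∀ ω, ‖(ε ω).toReal‖ ≤ β.toReal := fun ω => by
    rw [Real.norm_of_nonneg toReal_nonneg]; exact toReal_mono hβ (hεβ ω)
  have hf : MemLp (fun ω => (ε ω).toReal) p μ :=
    MemLp.of_bound hε.ennreal_toReal.aestronglyMeasurable _ (ae_of_all μ hbound)
  refine ⟨hf.toLp, hf.coeFn_toLp, ?_⟩
  have h := Lp.norm_le_of_ae_bound (f := hf.toLp) toReal_nonneg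
    (hf.coeFn_toLp.mono fun ω h => by rw [h]; exact hbound ω)
  simpa [measureUnivNNReal] using h

namespace IsUtility

variable {α : ℝ≥0∞} {U D : ℝ≥0∞ → ℝ≥0∞}

theorem apply_le_apply_inv (hU : IsUtility α U D) {x : ℝ≥0∞} (hx : x ≤ α⁻¹) :
    U x ≤ U α⁻¹ :=
  hU.monotoneOn ⟨zero_le, hx⟩ ⟨zero_le, le_rfl⟩ hx

/-- By concavity `U (1/α) / 2 ≤ U (1/(2α))`, and the right side is finite. -/
theorem apply_inv_ne_top (hU : IsUtility α U D) (hα : 0 < α) : U α⁻¹ ≠ ∞ := by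
  have hβ : α⁻¹ ≠ ∞ := inv_ne_top.mpr hα.ne'
  rcases eq_or_ne α⁻¹ 0 with h0 | h0
  · rw [h0, hU.map_zero]; exact zero_ne_top
  have hconc := hU.concaveOn 0 ⟨le_rfl, zero_le⟩ α⁻¹ ⟨zero_le, le_rfl⟩ 2⁻¹
    (ENNReal.inv_le_one.mpr one_le_two)
  simp only [hU.map_zero, one_sub_inv_two, mul_zero, zero_add] at hconc
  have hlt : 2⁻¹ * α⁻¹ < α⁻¹ := by
    rw [mul_comm, ← div_eq_mul_inv]; exact ENNReal.half_lt_self h0 hβ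
  exact fun htop => hU.finite_of_lt _ hlt (top_le_iff.mp (by simpa [htop] using hconc))

theorem measurable_comp (hU : IsUtility α U D) {Ω : Type*} [MeasurableSpace Ω] {ε : Ω → ℝ≥0∞}
    (hε : Measurable ε) (hεα : ∀ ω, ε ω ≤ α⁻¹) : Measurable fun ω => U (ε ω) :=
  hU.continuousOn.measurable_comp_of_forall_mem hε fun ω => ⟨zero_le, hεα ω⟩

variable {Ω : Type*} [MeasurableSpace Ω] {μ : Measure Ω}

theorem lintegral_convexComb_le (hU : IsUtility α U D) {ε₁ ε₂ : Ω → ℝ≥0∞}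
    (hε₁ : Measurable ε₁) (hε₁α : ∀ ω, ε₁ ω ≤ α⁻¹) (hε₂ : Measurable ε₂)
    (hε₂α : ∀ ω, ε₂ ω ≤ α⁻¹) {t : ℝ≥0∞} (ht : t ≤ 1) :
    t * ∫⁻ ω, U (ε₁ ω) ∂μ + (1 - t) * ∫⁻ ω, U (ε₂ ω) ∂μ ≤
      ∫⁻ ω, U (t * ε₁ ω + (1 - t) * ε₂ ω) ∂μ := by
  rw [← lintegral_const_mul _ (hU.measurable_comp hε₁ hε₁α),
    ← lintegral_const_mul _ (hU.measurable_comp hε₂ hε₂α),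
    ← lintegral_add_left ((hU.measurable_comp hε₁ hε₁α).const_mul _)]
  exact lintegral_mono fun ω =>
    hU.concaveOn _ ⟨zero_le, hε₁α ω⟩ _ ⟨zero_le, hε₂α ω⟩ t ht

/-- Dominated convergence, with the constant `U (1/α)` as dominating function. -/
theorem tendsto_lintegral_comp (hU : IsUtility α U D) (hα : 0 < α) [IsFiniteMeasure μ]
    {η : ℕ → Ω → ℝ≥0∞} {ε : Ω → ℝ≥0∞} (hη : ∀ j, Measurable (η j))
    (hηα : ∀ j ω, η j ω ≤ α⁻¹)
    (hlim : ∀ᵐ ω ∂μ, Tendsto (fun j => η j ω) atTop (𝓝 (ε ω))) :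
    Tendsto (fun j => ∫⁻ ω, U (η j ω) ∂μ) atTop (𝓝 (∫⁻ ω, U (ε ω) ∂μ)) := by
  refine tendsto_lintegral_of_dominated_convergence (fun _ => U α⁻¹)
    (fun j => hU.measurable_comp (hη j) (hηα j))
    (fun j => ae_of_all μ fun ω => hU.apply_le_apply_inv (hηα j ω))
    (by simpa using ENNReal.mul_ne_top (hU.apply_inv_ne_top hα) (measure_ne_top μ univ)) ?_
  filter_upwards [hlim] with ω hω
  have hmem : ∀ j, η j ω ∈ Icc 0 α⁻¹ := fun j => ⟨zero_le, hηα j ω⟩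
  have hεω : ε ω ∈ Icc 0 α⁻¹ := isClosed_Icc.mem_of_tendsto hω (Eventually.of_forall hmem)
  exact (hU.continuousOn _ hεω).tendsto.comp
    (tendsto_nhdsWithin_of_tendsto_nhds_of_eventually_within _ hω (Eventually.of_forall hmem))

end IsUtility

section ValidTest

variable {Ω : Type*} [MeasurableSpace Ω]

def IsValidTest (H : Set (Measure Ω)) (α : ℝ≥0∞) (ε : Ω → ℝ≥0∞) : Prop :=
  Measurable ε ∧ (∀ ω, ε ω ≤ α⁻¹) ∧ ∀ P ∈ H, ∫⁻ ω, ε ω ∂P ≤ 1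

variable {H : Set (Measure Ω)} {α : ℝ≥0∞}

theorem isValidTest_zero : IsValidTest H α 0 :=
  ⟨measurable_const, fun _ => zero_le, fun P _ => by simp⟩

theorem IsValidTest.convexComb {ε₁ ε₂ : Ω → ℝ≥0∞} (h₁ : IsValidTest H α ε₁)
    (h₂ : IsValidTest H α ε₂) {t : ℝ≥0∞} (ht : t ≤ 1) :
    IsValidTest H α fun ω => t * ε₁ ω + (1 - t) * ε₂ ω := by
  obtain ⟨hm₁, hb₁, hv₁⟩ := h₁
  obtain ⟨hm₂, hb₂, hv₂⟩ := h₂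
  have hcomb : ∀ {a b c : ℝ≥0∞}, a ≤ c → b ≤ c → t * a + (1 - t) * b ≤ c := fun ha hb =>
    (add_le_add (mul_le_mul_right ha t) (mul_le_mul_right hb _)).trans_eq
      (by rw [← add_mul, add_tsub_cancel_of_le ht, one_mul])
  refine ⟨(hm₁.const_mul t).add (hm₂.const_mul _), fun ω => hcomb (hb₁ ω) (hb₂ ω),
    fun P hP => ?_⟩
  rw [lintegral_add_left (hm₁.const_mul t), lintegral_const_mul _ hm₁,
    lintegral_const_mul _ hm₂]
  exact hcomb (hv₁ P hP) (hv₂ P hP)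

theorem IsValidTest.liminf {η : ℕ → Ω → ℝ≥0∞} (hη : ∀ j, IsValidTest H α (η j)) :
    IsValidTest H α fun ω => Filter.liminf (fun j => η j ω) atTop := by
  refine ⟨Measurable.liminf fun j => (hη j).1, fun ω => ?_, fun P hP => ?_⟩
  · exact liminf_le_of_frequently_le' (Frequently.of_forall fun j => (hη j).2.1 ω)
  · calc ∫⁻ ω, Filter.liminf (fun j => η j ω) atTop ∂P
        ≤ Filter.liminf (fun j => ∫⁻ ω, η j ω ∂P) atTop := lintegral_liminf_le fun j => (hη j).1
      _ ≤ 1 := liminf_le_of_frequently_le' (Frequently.of_forall fun j => (hη j).2.2 P hP)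

end ValidTest

section Lp

variable {Ω : Type*} [MeasurableSpace Ω] {H : Set (Measure Ω)} {α : ℝ≥0∞}
  {U D : ℝ≥0∞ → ℝ≥0∞} {μ : Measure Ω}

def validTestsUtilityGe (H : Set (Measure Ω)) (α : ℝ≥0∞) (U : ℝ≥0∞ → ℝ≥0∞) (μ : Measure Ω)
    (c : ℝ≥0∞) : Set (Lp ℝ 2 μ) :=
  {f | ∃ ε, IsValidTest H α ε ∧ c ≤ ∫⁻ ω, U (ε ω) ∂μ ∧ f =ᵐ[μ] fun ω => (ε ω).toReal}

theorem validTestsUtilityGe_anti : Antitone (validTestsUtilityGe H α U μ) :=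
  fun _ _ hc _ ⟨ε, hε, hεc, hf⟩ => ⟨ε, hε, hc.trans hεc, hf⟩

theorem IsUtility.convex_validTestsUtilityGe (hU : IsUtility α U D) (hα : 0 < α) (c : ℝ≥0∞) :
    Convex ℝ (validTestsUtilityGe H α U μ c) := by
  intro f₁ ⟨ε₁, h₁, hc₁, hf₁⟩ f₂ ⟨ε₂, h₂, hc₂, hf₂⟩ a b ha hb hab
  set t := ENNReal.ofReal a
  have ht : t ≤ 1 := ofReal_le_one.mpr (by linarith)
  have hbt : ENNReal.ofReal b = 1 - t := by
    rw [← ofReal_one, ← ofReal_sub _ ha, ← hab, add_sub_cancel_left]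
  refine ⟨fun ω => t * ε₁ ω + (1 - t) * ε₂ ω, h₁.convexComb h₂ ht, ?_, ?_⟩
  · calc c = t * c + (1 - t) * c := by rw [← add_mul, add_tsub_cancel_of_le ht, one_mul]
      _ ≤ t * ∫⁻ ω, U (ε₁ ω) ∂μ + (1 - t) * ∫⁻ ω, U (ε₂ ω) ∂μ := by gcongr
      _ ≤ _ := hU.lintegral_convexComb_le h₁.1 h₁.2.1 h₂.1 h₂.2.1 ht
  · have hfin : ∀ {ε : Ω → ℝ≥0∞}, IsValidTest H α ε → ∀ s ω, s ≠ ∞ → s * ε ω ≠ ∞ :=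
      fun hε s ω hs => mul_ne_top hs (ne_top_of_le_ne_top (inv_ne_top.mpr hα.ne') (hε.2.1 ω))
    filter_upwards [Lp.coeFn_add (a • f₁) (b • f₂), Lp.coeFn_smul a f₁, Lp.coeFn_smul b f₂,
      hf₁, hf₂] with ω h hs₁ hs₂ e₁ e₂
    rw [h, Pi.add_apply, hs₁, hs₂, Pi.smul_apply, Pi.smul_apply, e₁, e₂, ← hbt,
      toReal_add (hfin h₁ _ ω ofReal_ne_top) (hfin h₂ _ ω ofReal_ne_top), toReal_mul, toReal_mul,
      toReal_ofReal ha, toReal_ofReal hb, smul_eq_mul, smul_eq_mul]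

theorem IsUtility.exists_seq_validTest_tendsto_ae (hU : IsUtility α U D) (hα : 0 < α)
    [IsProbabilityMeasure μ] {u : ℕ → ℝ≥0∞} (hu : Monotone u)
    (hne : ∀ n, ∃ ε, IsValidTest H α ε ∧ u n ≤ ∫⁻ ω, U (ε ω) ∂μ) :
    ∃ η : ℕ → Ω → ℝ≥0∞, (∀ j, IsValidTest H α (η j)) ∧ (∀ j, u j ≤ ∫⁻ ω, U (η j ω) ∂μ) ∧
      ∀ᵐ ω ∂μ, ∃ l, Tendsto (fun j => η j ω) atTop (𝓝 l) := by
  have hbdd : ∀ n, ∃ f ∈ validTestsUtilityGe H α U μ (u n), ‖f‖ ≤ α⁻¹.toReal := fun n => by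
    obtain ⟨ε, hε, hεu⟩ := hne n
    obtain ⟨f, hf, hf_norm⟩ :=
      exists_Lp_ae_eq_toReal_norm_le (μ := μ) (p := 2) hε.1 (inv_ne_top.mpr hα.ne') hε.2.1
    exact ⟨f, ⟨ε, hε, hεu, hf⟩, hf_norm⟩
  obtain ⟨g, hg, hg_cauchy⟩ := exists_cauchySeq_mem_of_antitone_of_convex
    (validTestsUtilityGe_anti.comp_monotone hu) (fun n => hU.convex_validTestsUtilityGe hα _) hbdd
  obtain ⟨f, hf⟩ := cauchySeq_tendsto_of_complete hg_cauchy
  obtain ⟨ns, hns, hns_ae⟩ := (tendstoInMeasure_of_tendsto_Lp hf).exists_seq_tendsto_ae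
  choose η hη hηu hηg using hg
  refine ⟨fun j => η (ns j), fun j => hη _, fun j => (hu (hns.id_le j)).trans (hηu _), ?_⟩
  filter_upwards [hns_ae, ae_all_iff.mpr fun j => hηg (ns j)] with ω hω hωη
  refine ⟨ENNReal.ofReal (f ω), ?_⟩
  have hfin : ∀ j, η (ns j) ω ≠ ∞ :=
    fun j => ne_top_of_le_ne_top (inv_ne_top.mpr hα.ne') ((hη _).2.1 ω)
  simpa only [hωη, ofReal_toReal (hfin _)] using ENNReal.tendsto_ofReal hω

end Lp

theorem exists_expected_utility_optimal_test_general
    {Ω : Type*} [MeasurableSpace Ω]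
    (H : Set (Measure Ω))
    (Q : Measure Ω) [IsProbabilityMeasure Q]
    (α : ℝ≥0∞) (hα : 0 < α)
    (U D : ℝ≥0∞ → ℝ≥0∞) (hU : IsUtility α U D) :
    ∃ εs : Ω → ℝ≥0∞, Measurable εs ∧ (∀ ω, εs ω ≤ α⁻¹) ∧
      (∀ P ∈ H, ∫⁻ ω, εs ω ∂P ≤ 1) ∧
      ∀ ε : Ω → ℝ≥0∞, Measurable ε → (∀ ω, ε ω ≤ α⁻¹) →
        (∀ P ∈ H, ∫⁻ ω, ε ω ∂P ≤ 1) →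
        ∫⁻ ω, U (ε ω) ∂Q ≤ ∫⁻ ω, U (εs ω) ∂Q := by
  set I : (Ω → ℝ≥0∞) → ℝ≥0∞ := fun ε => ∫⁻ ω, U (ε ω) ∂Q
  set S := I '' {ε | IsValidTest H α ε}
  obtain ⟨u, hu, hu_tendsto, hu_mem⟩ :=
    exists_seq_tendsto_sSup (⟨I 0, 0, isValidTest_zero, rfl⟩ : S.Nonempty) (OrderTop.bddAbove S)
  obtain ⟨η, hη, hηu, hη_ae⟩ := hU.exists_seq_validTest_tendsto_ae hα hu fun n => by
    obtain ⟨ε, hε, hεu⟩ := hu_mem n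
    exact ⟨ε, hε, hεu.ge⟩
  -- A pointwise liminf, because the `η j` converge only `Q`-a.e. but validity is needed under
  -- every `P ∈ H`.
  have hεs := IsValidTest.liminf hη
  refine ⟨_, hεs.1, hεs.2.1, hεs.2.2, fun ε hm hb hv => ?_⟩
  have hlim := hU.tendsto_lintegral_comp hα (fun j => (hη j).1) (fun j => (hη j).2.1)
    (hη_ae.mono fun ω ⟨l, hl⟩ => hl.liminf_eq ▸ hl)
  calc I ε ≤ sSup S := le_sSup ⟨ε, ⟨hm, hb, hv⟩, rfl⟩
    _ ≤ I _ := le_of_tendsto_of_tendsto' hu_tendsto hlim hηu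

/-- A valid level-`α` expected-utility-optimal continuous test exists for an
arbitrary (possibly composite) hypothesis `H` against a simple alternative `Q`:
there is a measurable `ε* : Ω → [0, 1/α]` with `E_P[ε*] ≤ 1` for all `P ∈ H`
maximizing `E_Q[U(ε)]` over all such tests. -/
theorem exists_expected_utility_optimal_test
    {Ω : Type*} [MeasurableSpace Ω]
    (H : Set (Measure Ω)) (hH : ∀ P ∈ H, IsProbabilityMeasure P)
    (Q : Measure Ω) [IsProbabilityMeasure Q]
    (α : ℝ≥0∞) (hα : 0 < α)
    (U D : ℝ≥0∞ → ℝ≥0∞) (hU : IsUtility α U D) :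
    ∃ εs : Ω → ℝ≥0∞, Measurable εs ∧ (∀ ω, εs ω ≤ α⁻¹) ∧
      (∀ P ∈ H, ∫⁻ ω, εs ω ∂P ≤ 1) ∧
      ∀ ε : Ω → ℝ≥0∞, Measurable ε → (∀ ω, ε ω ≤ α⁻¹) →
        (∀ P ∈ H, ∫⁻ ω, ε ω ∂P ≤ 1) →
        ∫⁻ ω, U (ε ω) ∂Q ≤ ∫⁻ ω, U (εs ω) ∂Q :=
  exists_expected_utility_optimal_test_general H Q α hα U D hU
end

section
/- Let α ≥ 0, let H be a set of probability measures and Q a probability measure on Ω, let U be a utility function, and let E_α be the set of valid level-α continuous tests for H. Suppose ε* ∈ E_α is Q-almost surely strictly positive, 0 < E_Q[U'(ε*)·ε*] < ∞, and ε* satisfies the first-order condition E_Q[U'(ε*)·(ε − ε*)] ≤ 0 for every ε ∈ E_α. Define the measure P* on Ω by dP*/dQ = U'(ε*)/E_Q[U'(ε*)·ε*]. Then E_{P*}[ε] ≤ 1 for every ε ∈ E_α; that is, P* belongs to the level-α effective null hypothesis H_α^eff = {unsigned measures P with E_P[ε] ≤ 1 for all ε ∈ E_α}. -/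
open MeasureTheory ENNReal NNReal Set

theorem AntitoneOn.measurable_comp_of_le {Ω : Type*} [MeasurableSpace Ω] {D : ℝ≥0∞ → ℝ≥0∞}
    {b : ℝ≥0∞} (hD : AntitoneOn D (Icc 0 b)) {g : Ω → ℝ≥0∞} (hg : Measurable g)
    (hgb : ∀ ω, g ω ≤ b) : Measurable fun ω => D (g ω) := by
  have hanti : Antitone fun x => D (min x b) := fun x y hxy =>
    hD ⟨zero_le, min_le_right _ _⟩ ⟨zero_le, min_le_right _ _⟩ (min_le_min_right b hxy)
  simpa only [Function.comp_def, min_eq_left (hgb _)] using hanti.measurable.comp hg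

theorem lintegral_withDensity_div_const {Ω : Type*} [MeasurableSpace Ω] (μ : Measure Ω)
    {f g : Ω → ℝ≥0∞} (hf : Measurable f) (hg : Measurable g) (c : ℝ≥0∞) :
    ∫⁻ ω, g ω ∂μ.withDensity (fun ω => f ω / c) = (∫⁻ ω, f ω * g ω ∂μ) / c := by
  simp_rw [lintegral_withDensity_eq_lintegral_mul _ (hf.div_const c) hg, Pi.mul_apply,
    div_eq_mul_inv, mul_right_comm _ c⁻¹]
  exact lintegral_mul_const _ (hf.mul hg)

theorem ripr_mem_effective_null_general
    {Ω : Type*} [MeasurableSpace Ω]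
    (H : Set (Measure Ω))
    (Q : Measure Ω)
    (α : ℝ≥0∞)
    (U D : ℝ≥0∞ → ℝ≥0∞) (hU : IsUtility α U D)
    (εs : Ω → ℝ≥0∞) (hεsm : Measurable εs) (hεsb : ∀ ω, εs ω ≤ α⁻¹)
    (hc_pos : 0 < ∫⁻ ω, D (εs ω) * εs ω ∂Q)
    (hc_fin : ∫⁻ ω, D (εs ω) * εs ω ∂Q ≠ ∞)
    (hfoc : ∀ ε : Ω → ℝ≥0∞, Measurable ε → (∀ ω, ε ω ≤ α⁻¹) →
      (∀ P ∈ H, ∫⁻ ω, ε ω ∂P ≤ 1) →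
      ∫⁻ ω, D (εs ω) * ε ω ∂Q ≤ ∫⁻ ω, D (εs ω) * εs ω ∂Q) :
    ∀ ε : Ω → ℝ≥0∞, Measurable ε → (∀ ω, ε ω ≤ α⁻¹) →
      (∀ P ∈ H, ∫⁻ ω, ε ω ∂P ≤ 1) →
      ∫⁻ ω, ε ω
        ∂(Q.withDensity fun ω => D (εs ω) / ∫⁻ ω', D (εs ω') * εs ω' ∂Q) ≤ 1 := by
  intro ε hεm hεb hεval
  have hDm : Measurable fun ω => D (εs ω) := hU.deriv_antitoneOn.measurable_comp_of_le hεsm hεsb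
  rw [lintegral_withDensity_div_const Q hDm hεm, ENNReal.div_le_iff hc_pos.ne' hc_fin, one_mul]
  exact hfoc ε hεm hεb hεval

/-- The measure `P*` with `dP*/dQ = U'(ε*) / E_Q[U'(ε*)·ε*]` belongs to the
level-`α` effective null hypothesis: if `ε*` is a `Q`-a.s. positive valid
level-`α` continuous test for `H` with `0 < E_Q[U'(ε*)·ε*] < ∞` satisfying the
first-order condition `E_Q[U'(ε*)·(ε − ε*)] ≤ 0` for every valid level-`α`
continuous test `ε`, then `E_{P*}[ε] ≤ 1` for every valid level-`α` continuous
test `ε`. -/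
theorem ripr_mem_effective_null
    {Ω : Type*} [MeasurableSpace Ω]
    (H : Set (Measure Ω)) (hH : ∀ P ∈ H, IsProbabilityMeasure P)
    (Q : Measure Ω) [IsProbabilityMeasure Q]
    (α : ℝ≥0∞)
    (U D : ℝ≥0∞ → ℝ≥0∞) (hU : IsUtility α U D)
    (εs : Ω → ℝ≥0∞) (hεsm : Measurable εs) (hεsb : ∀ ω, εs ω ≤ α⁻¹)
    (hεsval : ∀ P ∈ H, ∫⁻ ω, εs ω ∂P ≤ 1)
    (hpos : ∀ᵐ ω ∂Q, 0 < εs ω)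
    (hc_pos : 0 < ∫⁻ ω, D (εs ω) * εs ω ∂Q)
    (hc_fin : ∫⁻ ω, D (εs ω) * εs ω ∂Q ≠ ∞)
    (hfoc : ∀ ε : Ω → ℝ≥0∞, Measurable ε → (∀ ω, ε ω ≤ α⁻¹) →
      (∀ P ∈ H, ∫⁻ ω, ε ω ∂P ≤ 1) →
      ∫⁻ ω, D (εs ω) * ε ω ∂Q ≤ ∫⁻ ω, D (εs ω) * εs ω ∂Q) :
    ∀ ε : Ω → ℝ≥0∞, Measurable ε → (∀ ω, ε ω ≤ α⁻¹) →
      (∀ P ∈ H, ∫⁻ ω, ε ω ∂P ≤ 1) →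
      ∫⁻ ω, ε ω
        ∂(Q.withDensity fun ω => D (εs ω) / ∫⁻ ω', D (εs ω') * εs ω' ∂Q) ≤ 1 :=
  ripr_mem_effective_null_general H Q α U D hU εs hεsm hεsb hc_pos hc_fin hfoc
end
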